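/- The function x ↦ arctan(f(x)/(1 + f(x))) · (1/x), defined for 0 < x < 1, extends to a continuous and bounded function on [0,1) (with value 0 at x = 0); in particular it is integrable on (0,1). -/

import Mathlib

/-- The real inverse hyperbolic tangent. -/
noncomputable def artanh (x : ℝ) : ℝ := (1/2) * Real.log ((1 + x) / (1 - x))

/-- `f(x) = (1/π)(artanh x − arctan x)`. -/
noncomputable def f (x : ℝ) : ℝ := (1 / Real.pi) * (artanh x - Real.arctan x)

/-!
On `[0,1)` we have `arctan x ≤ x ≤ artanh x`, so `f ≥ 0`, and `f(0) = f'(0) = 0`.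
Since `arctan t ≤ t` for `t ≥ 0`, the integrand lies between `0` and `f(x)/x`, which tends to
`f'(0) = 0`; this gives continuity at `0`. Away from `0` the integrand is at most `π/(2x)`,
and a continuous function bounded on `[0,1)` is integrable there.
-/

open Real hiding artanh
open Set Filter Topology MeasureTheory

lemma Real.arctan_le_self {x : ℝ} (hx : 0 ≤ x) : arctan x ≤ x := by
  simpa only [tan_arctan] using le_tan (arctan_nonneg.2 hx) (arctan_lt_pi_div_two x)

lemma self_le_artanh {x : ℝ} (h₀ : 0 ≤ x) (h₁ : x < 1) : x ≤ artanh x := by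
  simpa [artanh] using sum_range_le_log_div h₀ h₁ 1

lemma hasDerivAt_artanh {x : ℝ} (h₀ : -1 < x) (h₁ : x < 1) :
    HasDerivAt artanh (1 / (1 - x ^ 2)) x := by
  have h := hasDerivAt_half_log_one_add_div_one_sub_sub_sum_range 0 h₀ h₁
  simp only [Finset.sum_range_zero, sub_zero, pow_zero] at h
  exact h

lemma hasDerivAt_f {x : ℝ} (h₀ : -1 < x) (h₁ : x < 1) :
    HasDerivAt f (1 / π * (1 / (1 - x ^ 2) - 1 / (1 + x ^ 2))) x :=
  ((hasDerivAt_artanh h₀ h₁).sub (hasDerivAt_arctan x)).const_mul _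

lemma f_zero : f 0 = 0 := by simp [f, artanh]

lemma f_nonneg {x : ℝ} (h₀ : 0 ≤ x) (h₁ : x < 1) : 0 ≤ f x :=
  mul_nonneg (by positivity) (sub_nonneg.2 ((arctan_le_self h₀).trans (self_le_artanh h₀ h₁)))

lemma continuousOn_f : ContinuousOn f (Ico 0 1) := fun x hx ↦
  (hasDerivAt_f (by linarith [hx.1]) hx.2).continuousAt.continuousWithinAt

-- At `0` the function takes the value `g 0 / 0 = 0`.
lemma continuousAt_div_self_of_hasDerivAt_zero {g : ℝ → ℝ} (hg : HasDerivAt g 0 0)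
    (hg₀ : g 0 = 0) : ContinuousAt (fun x ↦ g x / x) 0 := by
  rw [← continuousWithinAt_compl_self, ContinuousWithinAt, div_zero]
  simpa [hg₀, div_eq_inv_mul] using hg.tendsto_slope_zero

lemma continuousAt_f_div_self : ContinuousAt (fun x ↦ f x / x) 0 := by
  refine continuousAt_div_self_of_hasDerivAt_zero ?_ f_zero
  simpa using hasDerivAt_f (x := 0) (by norm_num) (by norm_num)

noncomputable def integrand (x : ℝ) : ℝ := arctan (f x / (1 + f x)) * (1 / x)

lemma integrand_zero : integrand 0 = 0 := by simp [integrand]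

lemma integrand_nonneg {x : ℝ} (h₀ : 0 ≤ x) (h₁ : x < 1) : 0 ≤ integrand x :=
  mul_nonneg (arctan_nonneg.2 (by have := f_nonneg h₀ h₁; positivity)) (by positivity)

lemma integrand_le_f_div_self {x : ℝ} (h₀ : 0 ≤ x) (h₁ : x < 1) :
    integrand x ≤ f x / x := by
  have hf := f_nonneg h₀ h₁
  have hquot : f x / (1 + f x) ≤ f x := div_le_self hf (by linarith)
  rw [div_eq_mul_one_div]
  exact mul_le_mul_of_nonneg_right
    ((arctan_le_self (by positivity)).trans hquot) (by positivity)

lemma continuousWithinAt_integrand_zero : ContinuousWithinAt integrand (Ico 0 1) 0 := by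
  have hupper : Tendsto (fun x ↦ f x / x) (𝓝[Ico 0 1] 0) (𝓝 0) := by
    simpa [f_zero] using continuousAt_f_div_self.tendsto.mono_left nhdsWithin_le_nhds
  rw [ContinuousWithinAt, integrand_zero]
  refine tendsto_of_tendsto_of_tendsto_of_le_of_le' tendsto_const_nhds hupper ?_ ?_ <;>
    filter_upwards [self_mem_nhdsWithin] with x hx
  exacts [integrand_nonneg hx.1 hx.2, integrand_le_f_div_self hx.1 hx.2]

lemma continuousOn_integrand : ContinuousOn integrand (Ico 0 1) := by
  intro x hx
  rcases hx.1.eq_or_lt with rfl | hpos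
  · exact continuousWithinAt_integrand_zero
  have hf := continuousOn_f x hx
  have hden : 1 + f x ≠ 0 := by have := f_nonneg hx.1 hx.2; positivity
  exact (continuous_arctan.continuousAt.comp_continuousWithinAt
    (hf.div (continuousWithinAt_const.add hf) hden)).mul
    (continuousAt_const.div continuousAt_id hpos.ne').continuousWithinAt

lemma abs_integrand_le_pi {x : ℝ} (hx : 1 / 2 ≤ x) : |integrand x| ≤ π := by
  have harctan : |arctan (f x / (1 + f x))| ≤ π / 2 :=
    abs_le.2 ⟨(arctan_mem_Ioo _).1.le, (arctan_mem_Ioo _).2.le⟩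
  have hinv : |1 / x| ≤ 2 := by
    rw [abs_of_pos (by positivity), div_le_iff₀ (by linarith)]
    linarith
  calc |integrand x| = |arctan (f x / (1 + f x))| * |1 / x| := abs_mul _ _
    _ ≤ π / 2 * 2 := mul_le_mul harctan hinv (abs_nonneg _) (by positivity)
    _ = π := by ring

lemma exists_abs_integrand_le : ∃ M, ∀ x ∈ Ico (0 : ℝ) 1, |integrand x| ≤ M := by
  obtain ⟨C, hC⟩ := isCompact_Icc.exists_bound_of_continuousOn
    (continuousOn_integrand.mono (Icc_subset_Ico_right (by norm_num : (1 / 2 : ℝ) < 1)))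
  refine ⟨max C π, fun x hx ↦ ?_⟩
  rcases le_or_gt x (1 / 2) with hx' | hx'
  · exact (hC x ⟨hx.1, hx'⟩).trans (le_max_left _ _)
  · exact (abs_integrand_le_pi hx'.le).trans (le_max_right _ _)

lemma ContinuousOn.intervalIntegrable_of_norm_le {E : Type*} [NormedAddCommGroup E]
    {g : ℝ → E} {a b M : ℝ} (hab : a ≤ b) (hg : ContinuousOn g (Ico a b))
    (hM : ∀ x ∈ Ico a b, ‖g x‖ ≤ M) : IntervalIntegrable g volume a b := by
  rw [intervalIntegrable_iff_integrableOn_Ico_of_le hab]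
  exact .of_bound measure_Ico_lt_top (hg.aestronglyMeasurable measurableSet_Ico) M
    ((ae_restrict_iff' measurableSet_Ico).2 (ae_of_all _ hM))

/-- The integrand `arctan(f(x)/(1+f(x)))·(1/x)` (which takes the value `0` at `x = 0`,
since `f 0 = 0` and, in Lean, `1/0 = 0`) is continuous and bounded on `[0,1)`;
in particular it is integrable on `(0,1)`. -/
theorem integrand_continuousOn_bounded_integrable :
    ContinuousOn (fun x : ℝ => Real.arctan (f x / (1 + f x)) * (1/x)) (Set.Ico (0:ℝ) 1) ∧
    (∃ M : ℝ, ∀ x ∈ Set.Ico (0:ℝ) 1, |Real.arctan (f x / (1 + f x)) * (1/x)| ≤ M) ∧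
    IntervalIntegrable (fun x : ℝ => Real.arctan (f x / (1 + f x)) * (1/x))
      MeasureTheory.volume 0 1 := by
  obtain ⟨M, hM⟩ := exists_abs_integrand_le
  exact ⟨continuousOn_integrand, ⟨M, hM⟩,
    continuousOn_integrand.intervalIntegrable_of_norm_le zero_le_one hM⟩
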